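/- Let A = Σ_{m=1}^N λ_m A_m where the A_m are positive semidefinite operators summing to the identity on a finite-dimensional Hilbert space, let ρ be positive semidefinite with A ρ = ρ A = λ ρ, and let X be skew-Hermitian. Then Tr([X,[X,A]] ρ) = 2 Σ_{m=1}^N (λ_m − λ) Tr(A_m X ρ X†). -/
import Mathlib


open Matrix
open scoped ComplexOrder

/-- Sum-rule form with a POVM decomposition: if `A = Σ λ_m A_m` with `A_m ⪰ 0` summing to the
identity, `ρ ⪰ 0` with `A ρ = ρ A = λ ρ`, and `X` is skew-Hermitian, then
`Tr([X,[X,A]]ρ) = 2 Σ_m (λ_m − λ) Tr(A_m X ρ X†)`. -/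
theorem stmt2 {N n : ℕ} (lam : Fin n → ℝ) (Am : Fin n → Matrix (Fin N) (Fin N) ℂ)
    (hAm : ∀ m, (Am m).PosSemidef) (hsum : ∑ m, Am m = 1)
    (A ρ X : Matrix (Fin N) (Fin N) ℂ)
    (hA : A = ∑ m, (lam m : ℂ) • Am m)
    (hρ : ρ.PosSemidef) (l : ℝ)
    (h1 : A * ρ = (l : ℂ) • ρ) (h2 : ρ * A = (l : ℂ) • ρ) (hX : Xᴴ = -X) :
    ((X * (X * A - A * X) - (X * A - A * X) * X) * ρ).trace
      = 2 * ∑ m, ((lam m : ℂ) - (l : ℂ)) * (Am m * X * ρ * Xᴴ).trace := by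
  have key : ∀ B : Matrix (Fin N) (Fin N) ℂ,
      (B * X * ρ * Xᴴ).trace = -((X * B * X * ρ).trace) := by
    intro B
    rw [hX, Matrix.mul_neg, Matrix.trace_neg, neg_inj, Matrix.trace_mul_comm]
    congr 1
    noncomm_ring
  have lin1 : (X * A * X * ρ).trace = ∑ m, (lam m : ℂ) * (X * Am m * X * ρ).trace := by
    rw [hA]
    simp [Matrix.mul_sum, Matrix.sum_mul, Matrix.trace_sum, Matrix.mul_smul,
      Matrix.smul_mul, Matrix.trace_smul, smul_eq_mul]
  have lin2 : (X * X * ρ).trace = ∑ m, (X * Am m * X * ρ).trace := by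
    have e : X * X * ρ = X * (∑ m, Am m) * X * ρ := by rw [hsum, Matrix.mul_one]
    rw [e]
    simp [Matrix.mul_sum, Matrix.sum_mul, Matrix.trace_sum]
  have hR : (2 : ℂ) * ∑ m, ((lam m : ℂ) - (l : ℂ)) * (Am m * X * ρ * Xᴴ).trace
      = -2 * (X * A * X * ρ).trace + 2 * l * (X * X * ρ).trace := by
    calc (2 : ℂ) * ∑ m, ((lam m : ℂ) - (l : ℂ)) * (Am m * X * ρ * Xᴴ).trace
        = ∑ m, ((-2 : ℂ) * ((lam m : ℂ) * (X * Am m * X * ρ).trace)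
            + (2 * (l : ℂ)) * (X * Am m * X * ρ).trace) := by
          rw [Finset.mul_sum]
          exact Finset.sum_congr rfl fun m _ => by rw [key]; ring
      _ = -2 * (X * A * X * ρ).trace + 2 * l * (X * X * ρ).trace := by
          rw [Finset.sum_add_distrib, ← Finset.mul_sum, ← Finset.mul_sum, ← lin1, ← lin2]
  rw [hR]
  have t1 : (X * (X * A) * ρ).trace = (l : ℂ) * (X * X * ρ).trace := by
    have e : X * (X * A) * ρ = X * X * (A * ρ) := by noncomm_ring
    rw [e, h1, Matrix.mul_smul, Matrix.trace_smul, smul_eq_mul]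
  have t4 : (A * X * X * ρ).trace = (l : ℂ) * (X * X * ρ).trace := by
    have e : A * X * X * ρ = A * (X * X * ρ) := by noncomm_ring
    rw [e, Matrix.trace_mul_comm]
    have e2 : X * X * ρ * A = X * X * (ρ * A) := by noncomm_ring
    rw [e2, h2, Matrix.mul_smul, Matrix.trace_smul, smul_eq_mul]
  have expand : ((X * (X * A - A * X) - (X * A - A * X) * X) * ρ).trace
      = (X * (X * A) * ρ).trace - (X * (A * X) * ρ).trace
        - (X * A * X * ρ).trace + (A * X * X * ρ).trace := by
    simp only [Matrix.mul_sub, Matrix.sub_mul, Matrix.trace_sub, Matrix.mul_assoc]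
    ring
  rw [expand, t1, t4]
  have e3 : X * (A * X) * ρ = X * A * X * ρ := by noncomm_ring
  rw [e3]
  ring
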